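/- arXiv:1012.5083 — 2 statements merged into one kernel-verified Lean document; each statement's English description precedes it below -/
import Mathlib

section
/- Let ρ1: G → Aut_k(W1) be a continuous linear representation of G on a d-dimensional k-vector space W1, and ρ2: G → Aut_k(W2) a continuous linear representation of G on a finite-dimensional k-vector space W2. Suppose End_H(W1) = k·id and that W1 and W2 are isomorphic as H-modules. Then there exists a continuous character χ: Γ = G/H → k^* such that W2 is isomorphic as a G-module to the twist W1(χ), where W1(χ) denotes W1 with the G-action g·w = χ(π(g))·ρ1(g)(w). In particular, the one-dimensional G-modules det(W2) and det(W1) ⊗ χ^d are isomorphic, where det(W) denotes the top exterior power Λ^{dim W} of W with the induced G-action. -/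
/-!
For `g ∈ G` the endomorphism `e⁻¹ ∘ ρ2(g) ∘ e ∘ ρ1(g)⁻¹` of `W1` commutes with `H`, because `H` is
normal and `e` is `H`-equivariant; as `End_H(W1) = k`, it is a scalar `χ(g)`, i.e.
`ρ2(g) = e ∘ χ(g) ρ1(g) ∘ e⁻¹`. Since `ρ1(g)` is invertible the scalar is unique, which makes `χ`
multiplicative and trivial on `H`; it is continuous as a matrix coefficient of continuous
representations, and the determinant identity is the determinant of this conjugation.
-/

/-- A topological group is *procyclic* if it contains a dense cyclic subgroup. -/
def Procyclic (Γ : Type*) [Group Γ] [TopologicalSpace Γ] : Prop :=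
  ∃ γ : Γ, Dense ((Subgroup.zpowers γ : Subgroup Γ) : Set Γ)

/-- `subGn H n` is the subgroup `G_n = π⁻¹(nΓ)` where `π : G → Γ = G/H` is the quotient map and
`nΓ` is the (sub)group generated by the `n`-th powers in `Γ` (which, `Γ` being procyclic,
hence abelian, is just the image of the `n`-th power map). -/
def subGn {G : Type*} [Group G] (H : Subgroup G) [H.Normal] (n : ℕ) : Subgroup G :=
  Subgroup.comap (QuotientGroup.mk' H)
    (Subgroup.closure {x : G ⧸ H | ∃ γ : G ⧸ H, γ ^ n = x})

/-- A `k`-submodule `p` of `V` is invariant under the action (through `ρ`) of a subgroup `S`. -/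
def RepInvariant {k G V : Type*} [Field k] [Group G] [AddCommGroup V] [Module k V]
    (ρ : G →* (V →ₗ[k] V)) (S : Subgroup G) (p : Submodule k V) : Prop :=
  ∀ g ∈ S, ∀ v ∈ p, ρ g v ∈ p

/-- A `k`-linear endomorphism `f` of `V` is `S`-equivariant, i.e. `f ∈ End_S(V)`. -/
def RepEquivariant {k G V : Type*} [Field k] [Group G] [AddCommGroup V] [Module k V]
    (ρ : G →* (V →ₗ[k] V)) (S : Subgroup G) (f : V →ₗ[k] V) : Prop :=
  ∀ g ∈ S, ∀ v : V, f (ρ g v) = ρ g (f v)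

/-- `V` is a simple `S`-module: it is nonzero and its only `S`-invariant `k`-submodules
are `⊥` and `⊤`. -/
def RepSimple {k G V : Type*} [Field k] [Group G] [AddCommGroup V] [Module k V]
    (ρ : G →* (V →ₗ[k] V)) (S : Subgroup G) : Prop :=
  (⊤ : Submodule k V) ≠ ⊥ ∧
    ∀ p : Submodule k V, RepInvariant ρ S p → p = ⊥ ∨ p = ⊤

/-- `V` is an absolutely simple `S`-module: it is a simple `S`-module and
`End_S(V) = k·id`. -/
def RepAbsSimple {k G V : Type*} [Field k] [Group G] [AddCommGroup V] [Module k V]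
    (ρ : G →* (V →ₗ[k] V)) (S : Subgroup G) : Prop :=
  RepSimple ρ S ∧
    ∀ f : V →ₗ[k] V, RepEquivariant ρ S f → ∃ c : k, f = c • (LinearMap.id : V →ₗ[k] V)

/-- `V` is a semisimple `S`-module: every `S`-invariant submodule admits an
`S`-invariant complement. -/
def RepSemisimple {k G V : Type*} [Field k] [Group G] [AddCommGroup V] [Module k V]
    (ρ : G →* (V →ₗ[k] V)) (S : Subgroup G) : Prop :=
  ∀ p : Submodule k V, RepInvariant ρ S p →
    ∃ q : Submodule k V, RepInvariant ρ S q ∧ IsCompl p q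

section ScalarCharacter

variable {k G A : Type*} [Field k] [Group G] [Ring A] [Algebra k A] [Nontrivial A]

theorem eq_one_of_smul_eq_self {a : A} (ha : IsUnit a) {c : k} (h : c • a = a) : c = 1 :=
  smul_left_injective k ha.ne_zero (by simpa using h)

theorem exists_hom_units_of_forall_exists_smul (ρ φ : G →* A) (h : ∀ g, ∃ c : k, φ g = c • ρ g) :
    ∃ χ : G →* kˣ, ∀ g, φ g = (χ g : k) • ρ g := by
  choose c hc using h
  have isUnit_ρ (g : G) : IsUnit (ρ g) := (Group.isUnit g).map ρ
  let χ : G →* k :=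
    { toFun := c
      map_one' := eq_one_of_smul_eq_self (isUnit_ρ 1) (by rw [← hc, map_one, map_one])
      map_mul' := fun g g' => smul_left_injective k (isUnit_ρ (g * g')).ne_zero <| by
        show c (g * g') • ρ (g * g') = (c g * c g') • ρ (g * g')
        rw [← hc, map_mul, map_mul, hc, hc, smul_mul_smul] }
  exact ⟨χ.toHomUnits, hc⟩

end ScalarCharacter

theorem MonoidHom.commute_mul_inv_of_eqOn_normal {G M : Type*} [Group G] [Monoid M]
    {H : Subgroup G} [H.Normal] {ρ φ : G →* M} (hH : ∀ h ∈ H, φ h = ρ h) (g : G) {h : G}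
    (hh : h ∈ H) : Commute (φ g * ρ g⁻¹) (ρ h) := by
  have hconj : g⁻¹ * h * g ∈ H := Subgroup.Normal.conj_mem' ‹_› h hh g
  calc φ g * ρ g⁻¹ * ρ h = φ g * ρ (g⁻¹ * h * g) * ρ g⁻¹ := by
        simp only [mul_assoc, ← map_mul, mul_inv_cancel, mul_one]
    _ = φ (h * g) * ρ g⁻¹ := by
        rw [← hH _ hconj, ← map_mul, show g * (g⁻¹ * h * g) = h * g by group]
    _ = ρ h * (φ g * ρ g⁻¹) := by rw [map_mul, hH h hh, mul_assoc]

section Twist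

variable {k G V W : Type*} [Field k] [Group G] [AddCommGroup V] [Module k V]
  [AddCommGroup W] [Module k W] {ρ : G →* Module.End k V} {σ : G →* Module.End k W}
  {H : Subgroup G} [H.Normal]

theorem exists_eq_smul_of_eqOn_normal
    (hEnd : ∀ f : Module.End k V, RepEquivariant ρ H f → ∃ c : k, f = c • LinearMap.id)
    {φ : G →* Module.End k V} (hH : ∀ h ∈ H, φ h = ρ h) (g : G) : ∃ c : k, φ g = c • ρ g := by
  obtain ⟨c, hc⟩ := hEnd (φ g * ρ g⁻¹) fun h hh v =>
    LinearMap.congr_fun (MonoidHom.commute_mul_inv_of_eqOn_normal hH g hh).eq v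
  refine ⟨c, ?_⟩
  calc φ g = φ g * ρ g⁻¹ * ρ g := by rw [mul_assoc, ← map_mul, inv_mul_cancel, map_one, mul_one]
    _ = c • ρ g := by rw [hc]; rfl

theorem exists_quotient_char_eq_conj_smul [Nontrivial V]
    (hEnd : ∀ f : Module.End k V, RepEquivariant ρ H f → ∃ c : k, f = c • LinearMap.id)
    (e : V ≃ₗ[k] W) (he : ∀ h ∈ H, ∀ v, e (ρ h v) = σ h (e v)) :
    ∃ χ : G ⧸ H →* kˣ, ∀ g, σ g = e.conj ((χ g : k) • ρ g) := by
  let φ : G →* Module.End k V := (e.symm.conjAlgEquiv k : Module.End k W →* Module.End k V).comp σ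
  have hφ (g : G) : e.conj (φ g) = σ g := by ext; simp [φ]
  have hH (h : G) (hh : h ∈ H) : φ h = ρ h := by ext v; simp [φ, ← he h hh]
  obtain ⟨χ, hχ⟩ :=
    exists_hom_units_of_forall_exists_smul ρ φ (exists_eq_smul_of_eqOn_normal hEnd hH)
  have hχH : H ≤ χ.ker := fun h hh => χ.mem_ker.2 <|
    Units.ext (eq_one_of_smul_eq_self ((Group.isUnit h).map ρ) (by rw [← hχ, hH h hh]))
  exact ⟨QuotientGroup.lift H χ hχH, fun g => by rw [QuotientGroup.lift_mk, ← hχ, hφ]⟩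

end Twist

theorem continuous_of_eq_conj_smul {k G ι κ : Type*} [Field k] [TopologicalSpace k]
    [IsTopologicalRing k] [Group G] [TopologicalSpace G] [IsTopologicalGroup G] [Finite ι]
    [Finite κ] {ρ : G →* Module.End k (ι → k)} {σ : G →* Module.End k (κ → k)}
    (hρ : Continuous fun p : G × (ι → k) => ρ p.1 p.2)
    (hσ : Continuous fun p : G × (κ → k) => σ p.1 p.2) (e : (ι → k) ≃ₗ[k] (κ → k))
    {c : G → k} (hc : ∀ g, σ g = e.conj (c g • ρ g)) (i : ι) : Continuous c := by
  classical
  have hc_eq (g : G) : c g = e.symm (σ g (e (ρ g⁻¹ (Pi.single i 1)))) i := by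
    rw [hc, LinearEquiv.conj_apply_apply, e.symm_apply_apply, e.symm_apply_apply,
      LinearMap.smul_apply, ← Module.End.mul_apply, ← map_mul, mul_inv_cancel, map_one]
    simp
  have he := LinearMap.continuous_on_pi e.toLinearMap
  have he_symm := LinearMap.continuous_on_pi e.symm.toLinearMap
  rw [funext hc_eq]
  exact (continuous_apply i).comp <| he_symm.comp <| hσ.comp <| continuous_id.prodMk <|
    he.comp <| hρ.comp (continuous_inv.prodMk continuous_const)

/- The isomorphism `det W2 ≅ det W1 ⊗ χ^d` of one-dimensional `G`-modules is stated as the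
equality of their characters `g ↦ det ρ(g)`. -/
theorem twist_of_H_isomorphic_general
    {k G : Type*} [Field k] [TopologicalSpace k] [IsTopologicalRing k]
    [Group G] [TopologicalSpace G] [IsTopologicalGroup G]
    (H : Subgroup G) [H.Normal]
    (d m : ℕ) (hd : 0 < d)
    (ρ1 : G →* ((Fin d → k) →ₗ[k] (Fin d → k)))
    (ρ2 : G →* ((Fin m → k) →ₗ[k] (Fin m → k)))
    (hcont1 : Continuous fun p : G × (Fin d → k) => ρ1 p.1 p.2)
    (hcont2 : Continuous fun p : G × (Fin m → k) => ρ2 p.1 p.2)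
    (hEnd : ∀ f : (Fin d → k) →ₗ[k] (Fin d → k),
      RepEquivariant ρ1 H f →
        ∃ c : k, f = c • (LinearMap.id : (Fin d → k) →ₗ[k] (Fin d → k)))
    (hHiso : ∃ e : (Fin d → k) ≃ₗ[k] (Fin m → k),
      ∀ g ∈ H, ∀ v : Fin d → k, e (ρ1 g v) = ρ2 g (e v)) :
    ∃ χ : (G ⧸ H) →* kˣ,
      Continuous (fun γ : G ⧸ H => (χ γ : k)) ∧
      (∃ e : (Fin d → k) ≃ₗ[k] (Fin m → k),
        ∀ (g : G) (v : Fin d → k),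
          e ((χ (QuotientGroup.mk g) : k) • ρ1 g v) = ρ2 g (e v)) ∧
      (∀ g : G,
        LinearMap.det (ρ2 g) = (χ (QuotientGroup.mk g) : k) ^ d * LinearMap.det (ρ1 g))  := by
  obtain ⟨e, he⟩ := hHiso
  have : NeZero d := ⟨hd.ne'⟩
  obtain ⟨χ, hχ⟩ := exists_quotient_char_eq_conj_smul hEnd e he
  refine ⟨χ, ?_, ⟨e, fun g v => ?_⟩, fun g => ?_⟩
  · exact (QuotientGroup.isQuotientMap_mk H).continuous_iff.2
      (continuous_of_eq_conj_smul hcont1 hcont2 e hχ 0)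
  · simp [hχ g]
  · rw [hχ g, LinearEquiv.conj_apply, LinearMap.comp_assoc, LinearMap.det_conj,
      LinearMap.det_smul, Module.finrank_fin_fun]

/-- **Lemma (twist).** Let `G` be a profinite group, `H` a closed normal subgroup with
procyclic quotient `Γ = G/H`, and `k` a locally compact field. Let `ρ1 : G → Aut_k(W1)` be a
continuous linear representation on a `d`-dimensional `k`-vector space, `ρ2 : G → Aut_k(W2)` a
continuous finite-dimensional linear representation, with `End_H(W1) = k·id` and `W1 ≅ W2` as
`H`-modules. Then there exists a continuous character `χ : Γ = G/H → k^*` such that `W2` is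
isomorphic as a `G`-module to the twist `W1(χ)` (with action `g·w = χ(π(g))·ρ1(g)(w)`).
In particular the one-dimensional `G`-modules `det(W2)` and `det(W1) ⊗ χ^d` are isomorphic;
since a one-dimensional `G`-module is determined up to isomorphism by its character, and the
character of the top exterior power `det(W)` is `g ↦ det(ρ(g))`, this is expressed by the
equality of characters `det(ρ2(g)) = χ(π(g))^d · det(ρ1(g))` for all `g ∈ G`. -/
theorem twist_of_H_isomorphic
    {k G : Type*} [Field k] [TopologicalSpace k] [IsTopologicalRing k] [LocallyCompactSpace k]
    [Group G] [TopologicalSpace G] [IsTopologicalGroup G]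
    [CompactSpace G] [TotallyDisconnectedSpace G] [T2Space G]
    (H : Subgroup G) [H.Normal] (hHclosed : IsClosed (H : Set G))
    (hproc : Procyclic (G ⧸ H))
    (d m : ℕ) (hd : 0 < d)
    (ρ1 : G →* ((Fin d → k) →ₗ[k] (Fin d → k)))
    (ρ2 : G →* ((Fin m → k) →ₗ[k] (Fin m → k)))
    (hcont1 : Continuous fun p : G × (Fin d → k) => ρ1 p.1 p.2)
    (hcont2 : Continuous fun p : G × (Fin m → k) => ρ2 p.1 p.2)
    (hEnd : ∀ f : (Fin d → k) →ₗ[k] (Fin d → k),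
      RepEquivariant ρ1 H f →
        ∃ c : k, f = c • (LinearMap.id : (Fin d → k) →ₗ[k] (Fin d → k)))
    (hHiso : ∃ e : (Fin d → k) ≃ₗ[k] (Fin m → k),
      ∀ g ∈ H, ∀ v : Fin d → k, e (ρ1 g v) = ρ2 g (e v)) :
    ∃ χ : (G ⧸ H) →* kˣ,
      Continuous (fun γ : G ⧸ H => (χ γ : k)) ∧
      (∃ e : (Fin d → k) ≃ₗ[k] (Fin m → k),
        ∀ (g : G) (v : Fin d → k),
          e ((χ (QuotientGroup.mk g) : k) • ρ1 g v) = ρ2 g (e v)) ∧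
      (∀ g : G,
        LinearMap.det (ρ2 g) = (χ (QuotientGroup.mk g) : k) ^ d * LinearMap.det (ρ1 g)) :=
  twist_of_H_isomorphic_general H d m hd ρ1 ρ2 hcont1 hcont2 hEnd hHiso
end

section
/- Let ρ: G → Aut_k(V) be a continuous linear representation of G on a d-dimensional k-vector space V such that the G-module V is semisimple. Then there exists a positive integer n depending only on d (one may take n = (d!·d^d)!) such that the center of the k-algebra End_H(V) is contained in End_{G_n}(V). -/
universe u v

/-!
The group `G` acts by conjugation on the center `Z` of `End_H(V)`, trivially on `H`. If `V` is a
semisimple `G`-module then `Z` is reduced: for the nilradical `N` of `Z`, the subspace `N V` is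
`G`-stable, the projection onto it along a `G`-stable complement lies in `End_H(V)` and so commutes
with `Z`, whence `N V = N (N V)` and Nakayama gives `N = 0`. A reduced commutative algebra with a
faithful module has a vector with zero annihilator, so `dim Z ≤ d` and `Z` is a product of at most
`d` fields, each of degree at most `d` over `k`. An automorphism of `Z` permutes these factors, so
its `d!`-th power fixes each of them and acts on it with order dividing `d!`. Hence every
automorphism of `Z` has order dividing `(d!)²`, and `G_n` acts trivially on `Z` for `n = (d!)²`.
-/

open Module
open scoped Nat

theorem pow_eq_one_of_natCard_dvd {G : Type*} [Group G] {n : ℕ} (h : Nat.card G ∣ n) (g : G) :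
    g ^ n = 1 :=
  orderOf_dvd_iff_pow_eq_one.mp ((orderOf_dvd_natCard g).trans h)

theorem MulAction.pow_factorial_smul {G X : Type*} [Group G] [MulAction G X] [Finite X] {n : ℕ}
    (hn : Nat.card X ≤ n) (g : G) (x : X) : g ^ n ! • x = x := by
  have h := pow_eq_one_of_natCard_dvd
    (Nat.card_perm (α := X) ▸ Nat.factorial_dvd_factorial hn) (MulAction.toPermHom G X g)
  rw [← map_pow] at h
  exact congrArg (· x) h

theorem subGn_le {G : Type*} [Group G] {H K : Subgroup G} [H.Normal] {n : ℕ} (hHK : H ≤ K)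
    (hK : ∀ g : G, g ^ n ∈ K) : subGn H n ≤ K := by
  have hcl : Subgroup.closure {x : G ⧸ H | ∃ γ, γ ^ n = x} ≤ K.map (QuotientGroup.mk' H) := by
    rw [Subgroup.closure_le]
    rintro _ ⟨γ, rfl⟩
    obtain ⟨g, rfl⟩ := QuotientGroup.mk'_surjective H γ
    exact ⟨g ^ n, hK g, map_pow _ _ _⟩
  calc subGn H n ≤ (K.map (QuotientGroup.mk' H)).comap (QuotientGroup.mk' H) :=
        Subgroup.comap_mono hcl
    _ = K := by rw [Subgroup.comap_map_eq, QuotientGroup.ker_mk', sup_eq_left.mpr hHK]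

theorem AlgEquiv.natCard_le_finrank (k K : Type*) [Field k] [Field K] [Algebra k K]
    [FiniteDimensional k K] : Nat.card (K ≃ₐ[k] K) ≤ finrank k K :=
  (Nat.card_le_card_of_injective _ AlgEquiv.coe_toAlgHom_injective).trans
    (card_algHom_le_finrank k K K)

namespace IsArtinianRing

variable {R : Type*} [CommRing R] [IsArtinianRing R] [IsReduced R]

theorem eq_zero_of_forall_mem_maximalSpectrum {x : R}
    (hx : ∀ I : MaximalSpectrum R, x ∈ I.asIdeal) : x = 0 :=
  (equivPi R).injective <| funext fun I => by simpa [Ideal.Quotient.eq_zero_iff_mem] using hx I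

/- With `e I` the idempotent of the factor `R ⧸ I` of `R ≅ ∏ R ⧸ I`, pick `m I ≠ 0` in `e I • M`;
its annihilator is `I`, and `∑ I, m I` has annihilator `⨅ I = ⊥`. -/
theorem exists_torsionOf_eq_bot (M : Type*) [AddCommGroup M] [Module R M] [FaithfulSMul R M] :
    ∃ m : M, Ideal.torsionOf R M m = ⊥ := by
  classical
  have := Fintype.ofFinite (MaximalSpectrum R)
  let e (I : MaximalSpectrum R) : R := (equivPi R).symm (Pi.single I 1)
  have he_apply (I J : MaximalSpectrum R) : Ideal.Quotient.mk J.asIdeal (e I) =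
      (Pi.single I 1 : ∀ J : MaximalSpectrum R, R ⧸ J.asIdeal) J := by
    rw [← equivPi_apply, AlgEquiv.apply_symm_apply]
  have he_mem {I J : MaximalSpectrum R} (hIJ : I ≠ J) : e I ∈ J.asIdeal := by
    rw [← Ideal.Quotient.eq_zero_iff_mem, he_apply, Pi.single_eq_of_ne' hIJ]
  have hone_sub_mem (I : MaximalSpectrum R) : 1 - e I ∈ I.asIdeal := by
    rw [← Ideal.Quotient.eq_zero_iff_mem, map_sub, he_apply, Pi.single_eq_same, map_one, sub_self]
  have hcomponent (I : MaximalSpectrum R) :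
      ∃ m : M, Ideal.torsionOf R M m = I.asIdeal ∧ e I • m = m := by
    obtain ⟨w, hw⟩ : ∃ w : M, e I • w ≠ 0 := by
      by_contra! h
      have he0 : e I = 0 := eq_of_smul_eq_smul fun w => by rw [h w, zero_smul]
      exact I.isMaximal.ne_top ((Ideal.eq_top_iff_one _).mpr (by simpa [he0] using hone_sub_mem I))
    have hle : I.asIdeal ≤ Ideal.torsionOf R M (e I • w) := fun x hx => by
      have : x * e I = 0 := eq_zero_of_forall_mem_maximalSpectrum fun J => by
        by_cases hJ : I = J
        · exact hJ ▸ Ideal.mul_mem_right _ _ hx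
        · exact Ideal.mul_mem_left _ _ (he_mem hJ)
      rw [Ideal.mem_torsionOf_iff, smul_smul, this, zero_smul]
    have heq := I.isMaximal.eq_of_le (by rwa [Ne, Ideal.torsionOf_eq_top_iff]) hle
    refine ⟨e I • w, heq.symm, ?_⟩
    have := (Ideal.mem_torsionOf_iff _ _).mp (heq ▸ hone_sub_mem I)
    rwa [sub_smul, one_smul, sub_eq_zero, eq_comm] at this
  choose m hm_torsion hm_idem using hcomponent
  have hm_orth {I J : MaximalSpectrum R} (hIJ : I ≠ J) : e I • m J = 0 := by
    rw [← Ideal.mem_torsionOf_iff, hm_torsion]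
    exact he_mem hIJ
  refine ⟨∑ I, m I, eq_bot_iff.mpr fun x hx => (Submodule.mem_bot R).mpr ?_⟩
  refine eq_zero_of_forall_mem_maximalSpectrum fun J => ?_
  rw [← hm_torsion J, Ideal.mem_torsionOf_iff]
  have := congrArg (e J • ·) ((Ideal.mem_torsionOf_iff _ _).mp hx)
  simp only [smul_zero, Finset.smul_sum, smul_comm (e J) x] at this
  rwa [Finset.sum_eq_single J (fun I _ hIJ => by rw [hm_orth (Ne.symm hIJ), smul_zero])
    (by simp), hm_idem] at this

theorem finrank_le_finrank_of_faithfulSMul (k : Type*) {M : Type*} [Field k] [Algebra k R]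
    [AddCommGroup M] [Module k M] [Module R M] [IsScalarTower k R M] [FaithfulSMul R M]
    [FiniteDimensional k M] : finrank k R ≤ finrank k M := by
  obtain ⟨m, hm⟩ := exists_torsionOf_eq_bot (R := R) M
  refine LinearMap.finrank_le_finrank_of_injective
    (f := (LinearMap.toSpanSingleton R M m).restrictScalars k) fun x y hxy => ?_
  rw [← sub_eq_zero, ← Submodule.mem_bot R, ← hm, Ideal.mem_torsionOf_iff, sub_smul, sub_eq_zero]
  exact hxy

theorem natCard_maximalSpectrum_le_finrank (k : Type*) [Field k] [Algebra k R]
    [FiniteDimensional k R] : Nat.card (MaximalSpectrum R) ≤ finrank k R := by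
  have := Fintype.ofFinite (MaximalSpectrum R)
  have hpos (I : MaximalSpectrum R) : 1 ≤ finrank k (R ⧸ I.asIdeal) :=
    have := I.isMaximal
    Module.finrank_pos
  calc Nat.card (MaximalSpectrum R) = ∑ _ : MaximalSpectrum R, 1 := by simp
    _ ≤ ∑ I : MaximalSpectrum R, finrank k (R ⧸ I.asIdeal) := Finset.sum_le_sum fun I _ => hpos I
    _ = finrank k R := by
      rw [← Module.finrank_pi_fintype, ((equivPi R).toLinearEquiv.restrictScalars k).finrank_eq]

end IsArtinianRing

section Automorphisms

variable {k R : Type*} [Field k] [CommRing R] [Algebra k R]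

instance : MulAction (R ≃ₐ[k] R) (MaximalSpectrum R) where
  smul σ I := ⟨I.asIdeal.map σ, have := I.isMaximal; Ideal.map_isMaximal_of_equiv σ⟩
  one_smul I := MaximalSpectrum.ext (Ideal.map_id I.asIdeal)
  mul_smul σ τ _ := MaximalSpectrum.ext (Ideal.map_map (τ : R →+* R) (σ : R →+* R)).symm

def MaximalSpectrum.residueAut (I : MaximalSpectrum R) :
    MulAction.stabilizer (R ≃ₐ[k] R) I →* ((R ⧸ I.asIdeal) ≃ₐ[k] (R ⧸ I.asIdeal)) where
  toFun σ := Ideal.quotientEquivAlg I.asIdeal I.asIdeal σ.1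
    (congrArg MaximalSpectrum.asIdeal σ.2).symm
  map_one' := by ext ⟨x⟩; rfl
  map_mul' σ τ := by ext ⟨x⟩; rfl

theorem MaximalSpectrum.residueAut_mk (I : MaximalSpectrum R)
    (σ : MulAction.stabilizer (R ≃ₐ[k] R) I) (x : R) :
    I.residueAut σ (Ideal.Quotient.mk _ x) = Ideal.Quotient.mk _ (σ.1 x) := rfl

theorem AlgEquiv.pow_factorial_mul_factorial_eq_one [IsReduced R] [FiniteDimensional k R]
    {d : ℕ} (hd : finrank k R ≤ d) (σ : R ≃ₐ[k] R) : σ ^ (d ! * d !) = 1 := by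
  have : IsArtinianRing R := isArtinian_of_tower k inferInstance
  have hstab (I : MaximalSpectrum R) : σ ^ d ! ∈ MulAction.stabilizer (R ≃ₐ[k] R) I :=
    MulAction.pow_factorial_smul
      ((IsArtinianRing.natCard_maximalSpectrum_le_finrank k).trans hd) σ I
  have hresidue (I : MaximalSpectrum R) : I.residueAut ⟨σ ^ d !, hstab I⟩ ^ d ! = 1 := by
    have := I.isMaximal
    let := Ideal.Quotient.field I.asIdeal
    refine pow_eq_one_of_natCard_dvd (Nat.dvd_factorial Nat.card_pos ?_) _
    exact (AlgEquiv.natCard_le_finrank k _).trans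
      ((Submodule.finrank_quotient_le (I.asIdeal.restrictScalars k)).trans hd)
  ext x
  refine sub_eq_zero.mp (IsArtinianRing.eq_zero_of_forall_mem_maximalSpectrum fun I => ?_)
  rw [← Ideal.Quotient.eq_zero_iff_mem, map_sub, sub_eq_zero, pow_mul]
  have := congrArg (· (Ideal.Quotient.mk I.asIdeal x)) (hresidue I)
  simpa [← map_pow, MaximalSpectrum.residueAut_mk] using this

end Automorphisms

theorem Subalgebra.mem_centralizer_of_symm_mapsTo {R A : Type*} [CommSemiring R] [Semiring A]
    [Algebra R A] {s : Set A} {e : A ≃ₐ[R] A} (hs : ∀ t ∈ s, e.symm t ∈ s) {x : A}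
    (hx : x ∈ Subalgebra.centralizer R s) : e x ∈ Subalgebra.centralizer R s := fun t ht =>
  e.symm.injective <| by simp [hx _ (hs t ht)]

def MonoidHom.restrictSubalgebra {G R A : Type*} [Group G] [CommSemiring R] [Semiring A]
    [Algebra R A] (σ : G →* (A ≃ₐ[R] A)) (S : Subalgebra R A) (hS : ∀ g, ∀ x ∈ S, σ g x ∈ S) :
    G →* (S ≃ₐ[R] S) where
  toFun g := ((σ g).subalgebraMap S).trans <| Subalgebra.equivOfEq _ _ <| by
    refine le_antisymm (by rintro _ ⟨x, hx, rfl⟩; exact hS g x hx) fun x hx => ?_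
    exact ⟨σ g⁻¹ x, hS _ x hx, by simp [AlgEquiv.aut_inv]⟩
  map_one' := by ext; simp
  map_mul' g h := by ext; simp

section Representation

variable {k G V : Type*} [Field k] [Group G] [AddCommGroup V] [Module k V]
  (ρ : G →* (V →ₗ[k] V))

theorem repEquivariant_iff_mem_centralizer {S : Subgroup G} {f : Module.End k V} :
    RepEquivariant ρ S f ↔ f ∈ Subalgebra.centralizer k (ρ '' S) := by
  simp only [Subalgebra.mem_centralizer_iff, Set.forall_mem_image, LinearMap.ext_iff,
    Module.End.mul_apply, RepEquivariant, SetLike.mem_coe]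
  exact forall₂_congr fun _ _ => forall_congr' fun _ => eq_comm

theorem repEquivariant_projection {S : Subgroup G} {p q : Submodule k V}
    (hp : RepInvariant ρ S p) (hq : RepInvariant ρ S q) (hpq : IsCompl p q) :
    RepEquivariant ρ S (p.projection q hpq) := by
  intro g hg v
  conv_lhs => rw [← sub_add_cancel v (p.projection q hpq v), map_add, map_add]
  rw [(Submodule.projection_apply_eq_zero_iff hpq).mpr
      (hq g hg _ (Submodule.sub_projection_mem hpq v)),
    Submodule.projection_apply_of_mem_left hpq (hp g hg _ (Submodule.projection_apply_mem hpq v)),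
    zero_add]

/-- The center of `End_S(V)`, realised inside `End_k(V)` as the endomorphisms commuting with
`ρ(S)` and with everything that commutes with `ρ(S)`. -/
def equivariantEndCenter (S : Subgroup G) : Subalgebra k (Module.End k V) :=
  Subalgebra.centralizer k (ρ '' S ∪ Subalgebra.centralizer k (ρ '' S))

variable {ρ} in
theorem mem_equivariantEndCenter {S : Subgroup G} {z : Module.End k V} :
    z ∈ equivariantEndCenter ρ S ↔ z ∈ Subalgebra.centralizer k (ρ '' S) ∧
      ∀ u ∈ Subalgebra.centralizer k (ρ '' S), u * z = z * u := by
  simp only [equivariantEndCenter, Subalgebra.mem_centralizer_iff, Set.mem_union, or_imp,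
    forall_and, SetLike.mem_coe]

instance (S : Subgroup G) : CommRing (equivariantEndCenter ρ S) :=
  { (inferInstance : Ring (equivariantEndCenter ρ S)) with
    mul_comm a b := Subtype.ext <|
      ((mem_equivariantEndCenter.mp a.2).2 b (mem_equivariantEndCenter.mp b.2).1).symm }

def conjEnd : G →* (Module.End k V ≃ₐ[k] Module.End k V) :=
  (MulSemiringAction.toAlgAut (ConjAct (Module.End k V)ˣ) k (Module.End k V)).comp
    (ConjAct.toConjAct.toMonoidHom.comp ρ.toHomUnits)

theorem conjEnd_apply (g : G) (f : Module.End k V) : conjEnd ρ g f = ρ g * f * ρ g⁻¹ := by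
  simp [conjEnd, ConjAct.units_smul_def, ← map_inv]

theorem conjEnd_eq_self_iff {g : G} {f : Module.End k V} :
    conjEnd ρ g f = f ↔ f * ρ g = ρ g * f := by
  rw [conjEnd_apply, ← (ρ.toHomUnits g).mul_left_inj]
  simp [mul_assoc, ← map_mul, eq_comm]

variable (H : Subgroup G) [hH : H.Normal]

theorem conjEnd_mem_equivariantEndCenter (g : G) {z : Module.End k V}
    (hz : z ∈ equivariantEndCenter ρ H) : conjEnd ρ g z ∈ equivariantEndCenter ρ H := by
  have hρH (g : G) : ∀ t ∈ ρ '' H, conjEnd ρ g t ∈ ρ '' H := by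
    rintro _ ⟨h, hh, rfl⟩
    exact ⟨g * h * g⁻¹, hH.conj_mem h hh g, by simp [conjEnd_apply, map_mul]⟩
  refine Subalgebra.mem_centralizer_of_symm_mapsTo ?_ hz
  rintro t (ht | ht)
  · exact Or.inl (by simpa [AlgEquiv.aut_inv] using hρH g⁻¹ t ht)
  · exact Or.inr (Subalgebra.mem_centralizer_of_symm_mapsTo
      (fun t ht => by simpa [AlgEquiv.aut_inv] using hρH g t ht) ht)

def conjAut : G →* (equivariantEndCenter ρ H ≃ₐ[k] equivariantEndCenter ρ H) :=
  (conjEnd ρ).restrictSubalgebra _ fun g _ => conjEnd_mem_equivariantEndCenter ρ H g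

theorem coe_conjAut_apply (g : G) (z : equivariantEndCenter ρ H) :
    (conjAut ρ H g z : Module.End k V) = conjEnd ρ g z := rfl

theorem le_ker_conjAut : H ≤ (conjAut ρ H).ker := fun h hh =>
  AlgEquiv.ext fun z => Subtype.ext <| (conjEnd_eq_self_iff ρ).mpr <|
    ((mem_equivariantEndCenter.mp z.2).1 _ ⟨h, hh, rfl⟩).symm

theorem isReduced_equivariantEndCenter [FiniteDimensional k V] (hss : RepSemisimple ρ ⊤) :
    IsReduced (equivariantEndCenter ρ H) := by
  let U : Submodule (equivariantEndCenter ρ H) V := nilradical (equivariantEndCenter ρ H) • ⊤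
  have hUinv : RepInvariant ρ ⊤ (U.restrictScalars k) := by
    intro g _ v hv
    have hv : v ∈ nilradical (equivariantEndCenter ρ H) • (⊤ : Submodule _ V) :=
      (Submodule.restrictScalars_mem k U v).mp hv
    refine Submodule.smul_induction_on (p := fun v => ρ g v ∈ U) hv (fun z hz w _ => ?_)
      (fun x y hx hy => by simpa using U.add_mem hx hy)
    have : ρ g (z • w) = conjAut ρ H g z • ρ g w := by
      simp [Subalgebra.smul_def, coe_conjAut_apply, conjEnd_apply, ← Module.End.mul_apply,
        mul_assoc, ← map_mul]
    simp only [this]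
    exact Submodule.smul_mem_smul (mem_nilradical.mpr ((mem_nilradical.mp hz).map _)) trivial
  obtain ⟨W, hWinv, hUW⟩ := hss _ hUinv
  set P := (U.restrictScalars k).projection W hUW
  have hP : P ∈ Subalgebra.centralizer k (ρ '' H) :=
    (repEquivariant_iff_mem_centralizer ρ).mp fun g _ =>
      repEquivariant_projection ρ hUinv hWinv hUW g trivial
  have hUle : U ≤ nilradical (equivariantEndCenter ρ H) • U := by
    refine Submodule.smul_le.mpr fun z hz v _ => ?_
    have hzv : z • v = z • P v := calc
      z • v = P (z • v) := (Submodule.projection_apply_of_mem_left hUW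
          ((Submodule.restrictScalars_mem k U _).mpr (Submodule.smul_mem_smul hz trivial))).symm
      _ = z • P v := LinearMap.congr_fun ((mem_equivariantEndCenter.mp z.2).2 P hP) v
    exact hzv ▸ Submodule.smul_mem_smul hz (Submodule.projection_apply_mem hUW v)
  have : IsNoetherianRing (equivariantEndCenter ρ H) := isNoetherian_of_tower k inferInstance
  have : Module.Finite (equivariantEndCenter ρ H) V := .of_restrictScalars_finite k _ V
  have hU : U = ⊥ := Submodule.eq_bot_of_le_smul_of_le_jacobson_bot _ _
    (IsNoetherian.noetherian U) hUle Ideal.radical_le_jacobson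
  refine ⟨fun z hz => eq_of_smul_eq_smul (α := V) fun v => ?_⟩
  have : z • v ∈ U := Submodule.smul_mem_smul (mem_nilradical.mpr hz) trivial
  rw [hU, Submodule.mem_bot] at this
  rw [this, zero_smul]

theorem finrank_equivariantEndCenter_le [FiniteDimensional k V] (hss : RepSemisimple ρ ⊤) :
    finrank k (equivariantEndCenter ρ H) ≤ finrank k V :=
  have := isReduced_equivariantEndCenter ρ H hss
  have : IsArtinianRing (equivariantEndCenter ρ H) := isArtinian_of_tower k inferInstance
  IsArtinianRing.finrank_le_finrank_of_faithfulSMul k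

end Representation

theorem center_of_endH_in_endGn_general (d : ℕ) :
    ∃ n : ℕ, 0 < n ∧
      ∀ (k : Type u) (G : Type v)
        [Field k] [TopologicalSpace k] [IsTopologicalRing k] [LocallyCompactSpace k]
        [Group G] [TopologicalSpace G] [IsTopologicalGroup G]
        [CompactSpace G] [TotallyDisconnectedSpace G] [T2Space G]
        (H : Subgroup G) [H.Normal],
        IsClosed (H : Set G) →
        Procyclic (G ⧸ H) →
        ∀ ρ : G →* ((Fin d → k) →ₗ[k] (Fin d → k)),
        (Continuous fun p : G × (Fin d → k) => ρ p.1 p.2) →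
        RepSemisimple ρ (⊤ : Subgroup G) →
        ∀ f : (Fin d → k) →ₗ[k] (Fin d → k),
          RepEquivariant ρ H f →
          (∀ u : (Fin d → k) →ₗ[k] (Fin d → k),
            RepEquivariant ρ H u → f ∘ₗ u = u ∘ₗ f) →
          RepEquivariant ρ (subGn H n) f := by
  refine ⟨d ! * d !, by positivity, ?_⟩
  intro k G _ _ _ _ _ _ _ _ _ _ H _ _ _ ρ _ hss f hfH hfc
  have hf : f ∈ equivariantEndCenter ρ H := mem_equivariantEndCenter.mpr
    ⟨(repEquivariant_iff_mem_centralizer ρ).mp hfH,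
      fun u hu => (hfc u ((repEquivariant_iff_mem_centralizer ρ).mpr hu)).symm⟩
  have := isReduced_equivariantEndCenter ρ H hss
  have hdim : finrank k (equivariantEndCenter ρ H) ≤ d :=
    (finrank_equivariantEndCenter_le ρ H hss).trans_eq (Module.finrank_fin_fun k)
  have hker : subGn H (d ! * d !) ≤ (conjAut ρ H).ker := subGn_le (le_ker_conjAut ρ H) fun g => by
    rw [MonoidHom.mem_ker, map_pow, AlgEquiv.pow_factorial_mul_factorial_eq_one hdim]
  intro g hg
  have hfix := congrArg Subtype.val (AlgEquiv.ext_iff.mp (hker hg) ⟨f, hf⟩)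
  exact LinearMap.congr_fun ((conjEnd_eq_self_iff ρ).mp hfix)

/-- **Theorem (centerDel).** For every positive integer `d` there is a positive integer `n`
depending only on `d` (one may take `n = (d!·d^d)!`) with the following property. Whenever
`G` is a profinite group, `H` a closed normal subgroup with procyclic quotient `Γ = G/H`,
`k` a locally compact field, and `ρ : G → Aut_k(V)` a continuous linear representation on a
`d`-dimensional `k`-vector space `V` such that the `G`-module `V` is semisimple, the center
of the `k`-algebra `End_H(V)` lies in `End_{G_n}(V)`. -/
theorem center_of_endH_in_endGn (d : ℕ) (hd : 0 < d) :
    ∃ n : ℕ, 0 < n ∧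
      ∀ (k : Type u) (G : Type v)
        [Field k] [TopologicalSpace k] [IsTopologicalRing k] [LocallyCompactSpace k]
        [Group G] [TopologicalSpace G] [IsTopologicalGroup G]
        [CompactSpace G] [TotallyDisconnectedSpace G] [T2Space G]
        (H : Subgroup G) [H.Normal],
        IsClosed (H : Set G) →
        Procyclic (G ⧸ H) →
        ∀ ρ : G →* ((Fin d → k) →ₗ[k] (Fin d → k)),
        (Continuous fun p : G × (Fin d → k) => ρ p.1 p.2) →
        RepSemisimple ρ (⊤ : Subgroup G) →
        ∀ f : (Fin d → k) →ₗ[k] (Fin d → k),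
          RepEquivariant ρ H f →
          (∀ u : (Fin d → k) →ₗ[k] (Fin d → k),
            RepEquivariant ρ H u → f ∘ₗ u = u ∘ₗ f) →
          RepEquivariant ρ (subGn H n) f :=
  center_of_endH_in_endGn_general d
end
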